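/- Let f : 𝔅_n → 𝔅_n be the involution sending w = (w_1,…,w_n) to (−w_1,…,−w_n). Then for every w ∈ 𝔅_n: (1) if n = 2k or n = 2k+1 then odes_B(w) + odes_B(f(w)) = k; (2) if n = 2k+1 then edes_B(w) + edes_B(f(w)) = k+1, and if n = 2k then edes_B(w) + edes_B(f(w)) = k; (3) inv_B(w) + inv_B(f(w)) = n². -/
import Mathlib


open Finset

/-- The hyperoctahedral group `𝔅_n`, encoded as (permutation of positions, signs):
the signed permutation sends `i+1` to `±(σ i + 1)`. -/
abbrev BG (n : ℕ) := Equiv.Perm (Fin n) × (Fin n → Bool)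

/-- The value `π_i` (for `1 ≤ i ≤ n`) of the signed permutation, with `π_0 = 0`. -/
def bval {n : ℕ} (w : BG n) (i : ℕ) : ℤ :=
  if h : 1 ≤ i ∧ i ≤ n then
    (if w.2 ⟨i - 1, by omega⟩ then -1 else 1) * (((w.1 ⟨i - 1, by omega⟩ : Fin n) : ℕ) + 1 : ℤ)
  else 0

/-- `edes_B`: even `i ∈ {0,…,n−1}` with `π_i > π_{i+1}`. -/
def edesB {n : ℕ} (w : BG n) : ℕ :=
  ((range n).filter fun i => Even i ∧ bval w (i + 1) < bval w i).card

/-- `odes_B`: odd `i ∈ {0,…,n−1}` with `π_i > π_{i+1}`. -/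
def odesB {n : ℕ} (w : BG n) : ℕ :=
  ((range n).filter fun i => Odd i ∧ bval w (i + 1) < bval w i).card

/-- `easc_B`: even `i ∈ {0,…,n−1}` with `π_i < π_{i+1}`. -/
def eascB {n : ℕ} (w : BG n) : ℕ :=
  ((range n).filter fun i => Even i ∧ bval w i < bval w (i + 1)).card

/-- `oasc_B`: odd `i ∈ {0,…,n−1}` with `π_i < π_{i+1}`. -/
def oascB {n : ℕ} (w : BG n) : ℕ :=
  ((range n).filter fun i => Odd i ∧ bval w i < bval w (i + 1)).card

/-- type B inversion number -/
def invB {n : ℕ} (w : BG n) : ℕ :=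
  ((Icc 1 n ×ˢ Icc 1 n).filter fun p => p.1 < p.2 ∧ bval w p.2 < bval w p.1).card
  + ((Icc 1 n ×ˢ Icc 1 n).filter fun p => p.1 < p.2 ∧ bval w p.2 < -bval w p.1).card
  + ((Icc 1 n).filter fun i => bval w i < 0).card

/-- `B_n(s,t,q)` -/
noncomputable def Bpoly {A : Type*} [CommRing A] (n : ℕ) (s t q : A) : A :=
  ∑ w : BG n, s ^ edesB w * t ^ odesB w * q ^ invB w

/-- `B_n(1,q)` -/
noncomputable def BOne {A : Type*} [CommRing A] (n : ℕ) (q : A) : A :=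
  ∑ w : BG n, q ^ invB w

/-- `[k]_q` -/
def qInt {A : Type*} [CommRing A] (k : ℕ) (q : A) : A := ∑ i ∈ range k, q ^ i

/-- `[k]_q!` -/
def qFact {A : Type*} [CommRing A] (k : ℕ) (q : A) : A := ∏ i ∈ range k, qInt (i + 1) q

/-- the involution `w ↦ (−w_1, …, −w_n)` -/
def flipSigns {n : ℕ} (w : BG n) : BG n := (w.1, fun i => !w.2 i)

lemma bval_flip {n : ℕ} (w : BG n) (i : ℕ) : bval (flipSigns w) i = - bval w i := by
  unfold bval flipSigns
  split
  · cases h : w.2 _ <;> simp [h]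
  · simp

lemma bval_natAbs {n : ℕ} (w : BG n) {i : ℕ} (h : 1 ≤ i ∧ i ≤ n) :
    (bval w i).natAbs = ((w.1 ⟨i - 1, by omega⟩ : Fin n) : ℕ) + 1 := by
  rw [bval, dif_pos h]
  split <;> simp [Int.natAbs_mul] <;> omega

lemma bval_ne_zero {n : ℕ} (w : BG n) {i : ℕ} (h : 1 ≤ i ∧ i ≤ n) : bval w i ≠ 0 := by
  intro hc
  have := bval_natAbs w h
  rw [hc] at this; simp at this

lemma bval_natAbs_ne {n : ℕ} (w : BG n) {i j : ℕ} (hi : 1 ≤ i ∧ i ≤ n) (hj : 1 ≤ j ∧ j ≤ n)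
    (hij : i ≠ j) : (bval w i).natAbs ≠ (bval w j).natAbs := by
  rw [bval_natAbs w hi, bval_natAbs w hj]
  intro hc
  have h2 : w.1 ⟨i - 1, by omega⟩ = w.1 ⟨j - 1, by omega⟩ := by
    apply Fin.ext; omega
  have := w.1.injective h2
  rw [Fin.mk.injEq] at this
  omega

lemma card_even_range (n : ℕ) : ((range n).filter (fun i => Even i)).card = (n+1)/2 := by
  induction n with
  | zero => simp
  | succ m ih =>
    rw [Finset.range_add_one, Finset.filter_insert]
    rcases Nat.even_or_odd m with h | h
    · rw [if_pos h, Finset.card_insert_of_notMem (by simp), ih]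
      rw [Nat.even_iff] at h; omega
    · rw [if_neg (Nat.not_even_iff_odd.mpr h), ih]
      rw [Nat.odd_iff] at h; omega

lemma card_odd_range (n : ℕ) : ((range n).filter (fun i => Odd i)).card = n/2 := by
  have h1 := Finset.card_filter_add_card_filter_not
    (s := range n) (p := fun i => Even i)
  have h2 : (range n).filter (fun i => ¬ Even i) = (range n).filter (fun i => Odd i) := by
    apply filter_congr; intro i _; simp [Nat.not_even_iff_odd]
  rw [h2, card_even_range, Finset.card_range] at h1
  omega

theorem sign_flip_statistics (n k : ℕ) (hn : 1 ≤ n) (w : BG n) :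
    ((n = 2 * k ∨ n = 2 * k + 1) → odesB w + odesB (flipSigns w) = k)
    ∧ (n = 2 * k + 1 → edesB w + edesB (flipSigns w) = k + 1)
    ∧ (n = 2 * k → edesB w + edesB (flipSigns w) = k)
    ∧ invB w + invB (flipSigns w) = n ^ 2 := by
  have hval_ne : ∀ i j : ℕ, 1 ≤ i → i ≤ n → 1 ≤ j → j ≤ n → i ≠ j →
      bval w i ≠ bval w j ∧ bval w i ≠ -bval w j := by
    intro i j hi1 hi2 hj1 hj2 hij
    have h := bval_natAbs_ne w ⟨hi1, hi2⟩ ⟨hj1, hj2⟩ hij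
    constructor <;> intro hc <;> rw [hc] at h <;> simp at h
  have hne : ∀ i ∈ range n, bval w i ≠ bval w (i+1) := by
    intro i hi
    rw [mem_range] at hi
    rcases Nat.eq_zero_or_pos i with h0 | h0
    · subst h0
      have h : bval w 0 = 0 := by rw [bval, dif_neg (by omega)]
      rw [h]
      exact fun hc => bval_ne_zero w ⟨le_refl 1, by omega⟩ hc.symm
    · exact (hval_ne i (i+1) h0 (by omega) (by omega) (by omega) (by omega)).1
  -- descent counting
  have key : ∀ (P : ℕ → Prop) (_ : DecidablePred P),
      ((range n).filter fun i => P i ∧ bval w (i+1) < bval w i).card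
      + ((range n).filter fun i => P i ∧ bval (flipSigns w) (i+1) < bval (flipSigns w) i).card
      = ((range n).filter P).card := by
    intro P _
    have h1 : ((range n).filter fun i => P i ∧ bval w (i+1) < bval w i)
        = ((range n).filter P).filter (fun i => bval w (i+1) < bval w i) := by
      rw [filter_filter]
    have h2 : ((range n).filter fun i => P i ∧ bval (flipSigns w) (i+1) < bval (flipSigns w) i)
        = ((range n).filter P).filter (fun i => ¬ bval w (i+1) < bval w i) := by
      rw [filter_filter]
      apply filter_congr
      intro i hi
      have hd := hne i hi
      simp only [bval_flip]
      constructor <;> rintro ⟨hp, hlt⟩ <;> exact ⟨hp, by omega⟩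
    rw [h1, h2, Finset.card_filter_add_card_filter_not]
  have hodes : odesB w + odesB (flipSigns w) = n / 2 := by
    rw [odesB, odesB, key (fun i => Odd i) inferInstance, card_odd_range]
  have hedes : edesB w + edesB (flipSigns w) = (n+1) / 2 := by
    rw [edesB, edesB, key (fun i => Even i) inferInstance, card_even_range]
  -- inversions
  have hinv : invB w + invB (flipSigns w) = n ^ 2 := by
    set S := Icc 1 n ×ˢ Icc 1 n with hSdef
    have hmem : ∀ p : ℕ × ℕ, p ∈ S → 1 ≤ p.1 ∧ p.1 ≤ n ∧ 1 ≤ p.2 ∧ p.2 ≤ n := by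
      intro p hp
      rw [hSdef, Finset.mem_product, Finset.mem_Icc, Finset.mem_Icc] at hp
      omega
    set T := S.filter (fun p => p.1 < p.2) with hTdef
    have hA1 : (S.filter fun p => p.1 < p.2 ∧ bval w p.2 < bval w p.1).card
        + (S.filter fun p => p.1 < p.2 ∧ bval (flipSigns w) p.2 < bval (flipSigns w) p.1).card
        = T.card := by
      have e1 : (S.filter fun p => p.1 < p.2 ∧ bval w p.2 < bval w p.1)
          = T.filter (fun p => bval w p.2 < bval w p.1) := by rw [hTdef, filter_filter]
      have e2 : (S.filter fun p => p.1 < p.2 ∧ bval (flipSigns w) p.2 < bval (flipSigns w) p.1)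
          = T.filter (fun p => ¬ bval w p.2 < bval w p.1) := by
        rw [hTdef, filter_filter]
        apply filter_congr
        intro p hp
        have hm := hmem p hp
        constructor <;> rintro ⟨hlt, hv⟩ <;> refine ⟨hlt, ?_⟩
        · have := (hval_ne p.1 p.2 hm.1 hm.2.1 hm.2.2.1 hm.2.2.2 (by omega)).1
          rw [bval_flip, bval_flip] at hv; omega
        · have := (hval_ne p.1 p.2 hm.1 hm.2.1 hm.2.2.1 hm.2.2.2 (by omega)).1
          rw [bval_flip, bval_flip]; omega
      rw [e1, e2, Finset.card_filter_add_card_filter_not]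
    have hA2 : (S.filter fun p => p.1 < p.2 ∧ bval w p.2 < -bval w p.1).card
        + (S.filter fun p => p.1 < p.2 ∧ bval (flipSigns w) p.2 < -bval (flipSigns w) p.1).card
        = T.card := by
      have e1 : (S.filter fun p => p.1 < p.2 ∧ bval w p.2 < -bval w p.1)
          = T.filter (fun p => bval w p.2 < -bval w p.1) := by rw [hTdef, filter_filter]
      have e2 : (S.filter fun p => p.1 < p.2 ∧ bval (flipSigns w) p.2 < -bval (flipSigns w) p.1)
          = T.filter (fun p => ¬ bval w p.2 < -bval w p.1) := by
        rw [hTdef, filter_filter]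
        apply filter_congr
        intro p hp
        have hm := hmem p hp
        constructor <;> rintro ⟨hlt, hv⟩ <;> refine ⟨hlt, ?_⟩ <;>
          have hd := (hval_ne p.2 p.1 hm.2.2.1 hm.2.2.2 hm.1 hm.2.1 (by omega)).2
        · rw [bval_flip, bval_flip] at hv; omega
        · rw [bval_flip, bval_flip]; omega
      rw [e1, e2, Finset.card_filter_add_card_filter_not]
    have hA3 : ((Icc 1 n).filter fun i => bval w i < 0).card
        + ((Icc 1 n).filter fun i => bval (flipSigns w) i < 0).card = n := by
      have e2 : ((Icc 1 n).filter fun i => bval (flipSigns w) i < 0)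
          = (Icc 1 n).filter (fun i => ¬ bval w i < 0) := by
        apply filter_congr
        intro i hi
        rw [Finset.mem_Icc] at hi
        have := bval_ne_zero w hi
        rw [bval_flip]
        constructor <;> intro h <;> omega
      rw [e2, Finset.card_filter_add_card_filter_not, Nat.card_Icc]
      omega
    -- count T
    have hswap : (S.filter (fun p => p.2 < p.1)).card = T.card := by
      apply Finset.card_bij (fun p _ => Prod.swap p)
      · intro p hp
        rw [Finset.mem_filter] at hp ⊢
        have hm := hmem p hp.1
        constructor
        · rw [hSdef, Finset.mem_product, Finset.mem_Icc, Finset.mem_Icc, Prod.fst_swap,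
            Prod.snd_swap]
          omega
        · rw [Prod.fst_swap, Prod.snd_swap]
          exact hp.2
      · intro p _ q _ h
        exact Prod.swap_injective h
      · intro b hb
        refine ⟨Prod.swap b, ?_, Prod.swap_swap b⟩
        rw [Finset.mem_filter] at hb ⊢
        have hm := hmem b hb.1
        constructor
        · rw [hSdef, Finset.mem_product, Finset.mem_Icc, Finset.mem_Icc, Prod.fst_swap,
            Prod.snd_swap]
          omega
        · rw [Prod.fst_swap, Prod.snd_swap]
          exact hb.2
    have hdiag : (S.filter (fun p => p.1 = p.2)).card = n := by
      have e : S.filter (fun p => p.1 = p.2) = (Icc 1 n).image (fun i => (i, i)) := by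
        ext p
        rw [Finset.mem_filter, Finset.mem_image, hSdef, Finset.mem_product]
        constructor
        · rintro ⟨⟨h1, _⟩, h3⟩
          exact ⟨p.1, h1, by rw [Prod.ext_iff]; exact ⟨rfl, h3⟩⟩
        · rintro ⟨i, hi, rfl⟩
          exact ⟨⟨hi, hi⟩, rfl⟩
      rw [e, Finset.card_image_of_injective _ (fun a b h => (Prod.mk.injEq _ _ _ _ ▸ h).1),
        Nat.card_Icc]
      omega
    have hpart : T.card + (S.filter (fun p => p.2 < p.1)).card
        + (S.filter (fun p => p.1 = p.2)).card = n * n := by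
      have h1 : T.card + (S.filter (fun p : ℕ × ℕ => ¬ p.1 < p.2)).card = S.card := by
        rw [hTdef]
        exact Finset.card_filter_add_card_filter_not (p := fun p : ℕ × ℕ => p.1 < p.2)
      have h2 : S.filter (fun p : ℕ × ℕ => ¬ p.1 < p.2)
          = S.filter (fun p => p.2 < p.1) ∪ S.filter (fun p => p.1 = p.2) := by
        rw [← Finset.filter_or]
        apply filter_congr
        intro p _
        constructor <;> intro h <;> omega
      have hdisj : Disjoint (S.filter (fun p : ℕ × ℕ => p.2 < p.1))
          (S.filter (fun p : ℕ × ℕ => p.1 = p.2)) := by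
        rw [Finset.disjoint_filter]
        intro p _ h1 h2; omega
      rw [h2, Finset.card_union_of_disjoint hdisj] at h1
      have hScard : S.card = n * n := by
        rw [hSdef, Finset.card_product, Nat.card_Icc, Nat.add_sub_cancel]
      rw [hScard] at h1
      omega
    rw [invB, invB, pow_two, ← hSdef]
    omega
  refine ⟨?_, ?_, ?_, hinv⟩ <;> intro h <;> omega
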